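/- arXiv:1605.07299 — 2 statements merged into one kernel-verified Lean document; each statement's English description precedes it below -/
import Mathlib

section
/- Let μ be a finite positive Borel measure on ℝ with compact support. Then the sequence of monomials (e_k)_{k∈ℕ}, e_k(t) = t^k, is a Bessel sequence in L²(μ) if and only if there exists C > 0 such that μ({t : |t| > 1 − ε}) ≤ Cε for all ε ∈ (0,1). -/
/-!
Sufficiency: by the layer cake formula the tail bound `μ {s < |t|} ≤ C (1 - s)` gives the moment
bounds `∫ |t|^n dμ ≤ K / (n + 1)`, so the Gram matrix `⟨e_k, e_l⟩` of the monomials is dominated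
entrywise by `K` times the Hilbert matrix `1 / (k + l + 1)`. The Hilbert matrix is bounded on `ℓ²`
(here with constant `4`, via Hardy's inequality for Cesàro means), and a Gram matrix bounded on `ℓ²`
is exactly a Bessel sequence.

Necessity: on `A = {1 - ε < |t|}` each of the `N ≈ 1/(4ε)` even monomials `t^(2j)`, `j < N`, is at
least `1/2`, so testing the Bessel inequality against `1_A` gives `N μ(A)² / 4 ≤ C μ(A)`, that is
`μ(A) ≲ C ε`.
-/

open MeasureTheory

/-- The monomials `(t^k)_{k∈ℕ}` form a Bessel sequence in `L²(μ)` with bound `C`: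
`∑_k |⟨g, e_k⟩_{L²(μ)}|² ≤ C‖g‖²_{L²(μ)}` for every `g ∈ L²(μ)`
(stated via finite partial sums). -/
def MonomialsBesselWithReal (μ : Measure ℝ) (C : ℝ) : Prop :=
  ∀ g : ℝ → ℂ, MemLp g 2 μ → ∀ F : Finset ℕ,
    ∑ k ∈ F, ‖∫ t, g t * (starRingEnd ℂ) ((t : ℂ) ^ k) ∂μ‖ ^ 2 ≤ C * ∫ t, ‖g t‖ ^ 2 ∂μ

open Finset Filter Topology

namespace HilbertInequality

variable (a : ℕ → ℝ)

noncomputable def cesaro (k : ℕ) : ℝ := (∑ l ∈ range (k + 1), a l) / (k + 1)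

lemma cesaro_mul (k : ℕ) : cesaro a k * (k + 1) = ∑ l ∈ range (k + 1), a l :=
  div_mul_cancel₀ _ (by positivity)

/-- With `A = cesaro a`, writing `a (n+1) = (n+2) A (n+1) - (n+1) A n` shows that the increment of
the right side dominates that of the left side by `(n+1) (A (n+1) - A n)^2`. -/
lemma succ_mul_cesaro_sq_le (n : ℕ) :
    (n + 1) * cesaro a n ^ 2 ≤ ∑ k ∈ range (n + 1), (2 * a k * cesaro a k - cesaro a k ^ 2) := by
  induction n with
  | zero => simp [cesaro]; nlinarith [sq_nonneg (a 0)]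
  | succ n ih =>
    have hsucc : a (n + 1) = (n + 2) * cesaro a (n + 1) - (n + 1) * cesaro a n := by
      have h := cesaro_mul a (n + 1)
      rw [sum_range_succ, ← cesaro_mul a n] at h
      push_cast at h
      linarith
    rw [sum_range_succ, hsucc]
    push_cast
    nlinarith [mul_nonneg (n.cast_add_one_pos (α := ℝ)).le
      (sq_nonneg (cesaro a (n + 1) - cesaro a n))]

lemma sum_cesaro_sq_le (N : ℕ) :
    ∑ k ∈ range N, cesaro a k ^ 2 ≤ 2 * ∑ k ∈ range N, a k * cesaro a k := by
  have h : 0 ≤ ∑ k ∈ range N, (2 * a k * cesaro a k - cesaro a k ^ 2) := by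
    cases N with
    | zero => simp
    | succ n => exact (by positivity : (0 : ℝ) ≤ (n + 1) * cesaro a n ^ 2).trans
                  (succ_mul_cesaro_sq_le a n)
  simp only [sum_sub_distrib, mul_assoc, ← mul_sum] at h
  linarith

/-- Hardy's inequality: combine `∑ A² ≤ 2 ∑ a A` with Cauchy–Schwarz `(∑ a A)² ≤ ∑ a² ∑ A²`. -/
lemma sum_mul_cesaro_le (N : ℕ) :
    ∑ k ∈ range N, a k * cesaro a k ≤ 2 * ∑ k ∈ range N, a k ^ 2 := by
  have hcs := sum_mul_sq_le_sq_mul_sq (range N) a (cesaro a)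
  have hhardy := sum_cesaro_sq_le a N
  have hsq : 0 ≤ ∑ k ∈ range N, a k ^ 2 := sum_nonneg fun k _ => sq_nonneg (a k)
  set W := ∑ k ∈ range N, a k * cesaro a k
  rcases le_or_gt W 0 with hW | hW
  · linarith
  · nlinarith

lemma sum_sum_mul_div_le_sum_mul_cesaro (ha : ∀ k, 0 ≤ a k) (N : ℕ) :
    ∑ k ∈ range N, ∑ l ∈ range N, a k * a l / (k + l + 1) ≤
      2 * ∑ k ∈ range N, a k * cesaro a k := by
  set T : ℕ → ℕ → ℝ := fun k l => if l ≤ k then a k * a l / (k + 1) else 0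
  have hT0 : ∀ k l, 0 ≤ T k l := fun k l => by
    simp only [T]; split_ifs
    exacts [div_nonneg (mul_nonneg (ha k) (ha l)) (by positivity), le_rfl]
  have hT : ∀ k l, a k * a l / (k + l + 1) ≤ T k l + T l k := by
    intro k l
    have hprod := mul_nonneg (ha k) (ha l)
    rcases le_total l k with h | h
    · have hlk := hT0 l k
      simp only [T, if_pos h]
      have : a k * a l / (k + l + 1) ≤ a k * a l / (k + 1) := by
        gcongr; linarith [(l.cast_nonneg : (0 : ℝ) ≤ l)]
      linarith
    · have hkl := hT0 k l
      simp only [T, if_pos h]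
      have : a k * a l / (k + l + 1) ≤ a l * a k / (l + 1) := by
        rw [mul_comm (a l)]; gcongr; linarith [(k.cast_nonneg : (0 : ℝ) ≤ k)]
      linarith
  have hrow : ∀ k ∈ range N, ∑ l ∈ range N, T k l = a k * cesaro a k := by
    intro k hk
    have hfilter : (range N).filter (· ≤ k) = range (k + 1) := by
      ext l; simp only [mem_filter, mem_range] at hk ⊢; omega
    simp only [T]
    rw [← sum_filter, hfilter, cesaro, ← sum_div, ← mul_sum, mul_div_assoc]
  calc ∑ k ∈ range N, ∑ l ∈ range N, a k * a l / (k + l + 1)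
      ≤ ∑ k ∈ range N, ∑ l ∈ range N, (T k l + T l k) :=
        sum_le_sum fun k _ => sum_le_sum fun l _ => hT k l
    _ = 2 * ∑ k ∈ range N, a k * cesaro a k := by
        simp only [sum_add_distrib]
        rw [sum_comm (f := fun k l => T l k), sum_congr rfl hrow]
        ring

end HilbertInequality

open HilbertInequality in
theorem sum_sum_mul_div_add_add_one_le (a : ℕ → ℝ) (ha : ∀ k, 0 ≤ a k) (N : ℕ) :
    ∑ k ∈ range N, ∑ l ∈ range N, a k * a l / (k + l + 1) ≤ 4 * ∑ k ∈ range N, a k ^ 2 := by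
  linarith [sum_sum_mul_div_le_sum_mul_cesaro a ha N, sum_mul_cesaro_le a N]

section InnerProductSpace

variable {𝕜 E ι : Type*} [RCLike 𝕜] [NormedAddCommGroup E] [InnerProductSpace 𝕜 E]

local notation "⟪" x ", " y "⟫" => inner 𝕜 x y

lemma norm_sum_smul_sq_le (v : ι → E) (s : Finset ι) (c : ι → 𝕜) :
    ‖∑ i ∈ s, c i • v i‖ ^ 2 ≤ ∑ i ∈ s, ∑ j ∈ s, ‖c i‖ * ‖c j‖ * ‖⟪v i, v j⟫‖ := by
  rw [@norm_sq_eq_re_inner 𝕜]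
  refine (RCLike.re_le_norm _).trans ?_
  rw [sum_inner]
  simp_rw [inner_sum, inner_smul_left, inner_smul_right]
  refine (norm_sum_le _ _).trans (sum_le_sum fun i _ => (norm_sum_le _ _).trans ?_)
  simp [mul_assoc]

/-- Testing against the coefficients `c i = ⟪v i, x⟫` turns the bound on the synthesis operator
into the bound on the analysis operator. -/
lemma sum_norm_inner_sq_le {v : ι → E} {s : Finset ι} {C : ℝ} (hC : 0 ≤ C)
    (h : ∀ c : ι → 𝕜, ‖∑ i ∈ s, c i • v i‖ ^ 2 ≤ C * ∑ i ∈ s, ‖c i‖ ^ 2) (x : E) :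
    ∑ i ∈ s, ‖⟪v i, x⟫‖ ^ 2 ≤ C * ‖x‖ ^ 2 := by
  set S := ∑ i ∈ s, ‖⟪v i, x⟫‖ ^ 2
  set y := ∑ i ∈ s, ⟪v i, x⟫ • v i
  have hS : ⟪y, x⟫ = (S : 𝕜) := by
    simp only [y, S, sum_inner, inner_smul_left, RCLike.conj_mul, RCLike.ofReal_sum,
      RCLike.ofReal_pow]
  have hSy : S ≤ ‖y‖ * ‖x‖ := by
    simpa [hS] using (RCLike.re_le_norm ⟪y, x⟫).trans (norm_inner_le_norm (𝕜 := 𝕜) y x)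
  have hy : ‖y‖ ^ 2 ≤ C * S := h _
  have hS0 : 0 ≤ S := sum_nonneg fun i _ => by positivity
  rcases hS0.eq_or_lt with hS0 | hS0
  · rw [← hS0]; positivity
  · have : S ^ 2 ≤ C * S * ‖x‖ ^ 2 := by
      calc S ^ 2 ≤ (‖y‖ * ‖x‖) ^ 2 := pow_le_pow_left₀ hS0.le hSy 2
        _ = ‖y‖ ^ 2 * ‖x‖ ^ 2 := mul_pow _ _ _
        _ ≤ C * S * ‖x‖ ^ 2 := by gcongr
    nlinarith

end InnerProductSpace

lemma integral_Ioc_succ_mul_pow_mul_one_sub (n : ℕ) :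
    ∫ s in Set.Ioc (0 : ℝ) 1, ((n : ℝ) + 1) * s ^ n * (1 - s) = 1 / (n + 2) := by
  rw [← intervalIntegral.integral_of_le zero_le_one]
  have h : ∀ s : ℝ, ((n : ℝ) + 1) * s ^ n * (1 - s) =
      ((n : ℝ) + 1) * s ^ n - ((n : ℝ) + 1) * s ^ (n + 1) := fun s => by ring
  simp_rw [h]
  rw [intervalIntegral.integral_sub ((by fun_prop : Continuous _).intervalIntegrable _ _)
    ((by fun_prop : Continuous _).intervalIntegrable _ _)]
  simp only [intervalIntegral.integral_const_mul, integral_pow]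
  field_simp
  push_cast
  ring

section Tail

variable {μ : Measure ℝ} {C : ℝ}
  (htail : ∀ ε ∈ Set.Ioo (0 : ℝ) 1, μ {t : ℝ | 1 - ε < |t|} ≤ ENNReal.ofReal (C * ε))
include htail

lemma measure_lt_abs_eq_zero_of_tail {s : ℝ} (hs : 1 ≤ s) : μ {t : ℝ | s < |t|} = 0 := by
  have hlim : Tendsto (fun ε => ENNReal.ofReal (C * ε)) (𝓝[>] 0) (𝓝 0) := by
    have : Tendsto (fun ε => C * ε) (𝓝[>] 0) (𝓝 0) :=
      tendsto_nhdsWithin_of_tendsto_nhds (by simpa using (continuous_const_mul C).tendsto 0)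
    exact (by simpa using ENNReal.continuous_ofReal.tendsto 0 :
      Tendsto ENNReal.ofReal (𝓝 0) (𝓝 0)).comp this
  refine nonpos_iff_eq_zero.mp (ge_of_tendsto hlim ?_)
  filter_upwards [Ioo_mem_nhdsGT (zero_lt_one' ℝ)] with ε hε
  refine (measure_mono fun t (ht : s < |t|) => ?_).trans (htail ε hε)
  show 1 - ε < |t|
  linarith [hε.1]

/-- Layer cake: `∫ |t|^(n+1) dμ = ∫₀^∞ (n+1) s^n μ{s < |t|} ds ≤ C ∫₀^1 (n+1) s^n (1-s) ds`. -/
lemma integral_abs_pow_succ_le (hC : 0 ≤ C) (n : ℕ) : ∫ t, |t| ^ (n + 1) ∂μ ≤ C / (n + 2) := by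
  set g : ℝ → ℝ := fun s => ((n : ℝ) + 1) * s ^ n
  have hg : ∀ x : ℝ, ∫ s in (0 : ℝ)..x, g s = x ^ (n + 1) := by
    intro x
    rw [intervalIntegral.integral_const_mul, integral_pow]
    field_simp
    simp
  have hlayer := lintegral_comp_eq_lintegral_meas_lt_mul μ (f := fun t => |t|) (g := g)
    (Eventually.of_forall fun t => abs_nonneg t) continuous_abs.measurable.aemeasurable
    (fun _ _ => (continuous_const.mul (continuous_pow n)).intervalIntegrable _ _)
    (by filter_upwards [self_mem_ae_restrict measurableSet_Ioi] with s (hs : 0 < s)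
        positivity)
  simp only [hg] at hlayer
  rw [integral_eq_lintegral_of_nonneg_ae (Eventually.of_forall fun t => by positivity)
    (by fun_prop), hlayer]
  refine ENNReal.toReal_le_of_le_ofReal (by positivity) ?_
  calc ∫⁻ s in Set.Ioi 0, μ {t | s < |t|} * ENNReal.ofReal (g s)
      ≤ ∫⁻ s in Set.Ioi 0,
          (Set.Ioc 0 1).indicator (fun s => ENNReal.ofReal (C * (g s * (1 - s)))) s := by
        refine setLIntegral_mono' measurableSet_Ioi fun s (hs : 0 < s) => ?_
        rcases lt_or_ge s 1 with hs1 | hs1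
        · rw [Set.indicator_of_mem (Set.mem_Ioc.mpr ⟨hs, hs1.le⟩),
            show C * (g s * (1 - s)) = C * (1 - s) * g s by ring,
            ENNReal.ofReal_mul (p := C * (1 - s)) (q := g s) (by nlinarith)]
          refine mul_le_mul_left ?_ _
          simpa using htail (1 - s) ⟨by linarith, by linarith⟩
        · simp [measure_lt_abs_eq_zero_of_tail htail hs1]
    _ ≤ ∫⁻ s in Set.Ioc 0 1, ENNReal.ofReal (C * (g s * (1 - s))) := by
        rw [← lintegral_indicator measurableSet_Ioc]
        exact setLIntegral_le_lintegral _ _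
    _ = ENNReal.ofReal (C / (n + 2)) := by
        rw [← ofReal_integral_eq_lintegral_ofReal, integral_const_mul,
          integral_Ioc_succ_mul_pow_mul_one_sub, mul_one_div]
        · exact (by fun_prop : Continuous fun s => C * (g s * (1 - s))).integrableOn_Ioc
        · filter_upwards [self_mem_ae_restrict measurableSet_Ioc] with s hs
          have : 0 ≤ 1 - s := by linarith [hs.2]
          have : 0 ≤ s := hs.1.le
          positivity

lemma integral_abs_pow_le (hC : 0 ≤ C) (n : ℕ) :
    ∫ t, |t| ^ n ∂μ ≤ (C + μ.real Set.univ) / (n + 1) := by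
  rcases n with _ | n
  · simp [hC]
  · calc ∫ t, |t| ^ (n + 1) ∂μ ≤ C / (n + 2) := integral_abs_pow_succ_le htail hC n
      _ ≤ (C + μ.real Set.univ) / ((n + 1 : ℕ) + 1) := by
        push_cast
        rw [add_assoc, one_add_one_eq_two]
        gcongr
        exact le_add_of_nonneg_right measureReal_nonneg

end Tail

section L2

variable {α 𝕜 E : Type*} [MeasurableSpace α] {μ : Measure α} [RCLike 𝕜] [NormedAddCommGroup E]
  [InnerProductSpace 𝕜 E]

lemma inner_toLp_toLp {f g : α → E} (hf : MemLp f 2 μ) (hg : MemLp g 2 μ) :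
    inner 𝕜 (hf.toLp f) (hg.toLp g) = ∫ a, inner 𝕜 (f a) (g a) ∂μ := by
  rw [L2.inner_def]
  refine integral_congr_ae ?_
  filter_upwards [hf.coeFn_toLp, hg.coeFn_toLp] with a hfa hga
  rw [hfa, hga]

lemma norm_toLp_sq {f : α → 𝕜} (hf : MemLp f 2 μ) :
    ‖hf.toLp f‖ ^ 2 = ∫ a, ‖f a‖ ^ 2 ∂μ := by
  rw [@norm_sq_eq_re_inner 𝕜, inner_toLp_toLp]
  simp_rw [inner_self_eq_norm_sq_to_K, ← RCLike.ofReal_pow, integral_ofReal, RCLike.ofReal_re]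

end L2

lemma memLp_monomial {μ : Measure ℝ} [IsFiniteMeasure μ] {R : ℝ} (hR : μ {t : ℝ | R < |t|} = 0)
    (k : ℕ) : MemLp (fun t : ℝ => (t : ℂ) ^ k) 2 μ := by
  refine MemLp.of_bound (by fun_prop) (R ^ k) ?_
  have : ∀ᵐ t ∂μ, |t| ≤ R := by
    rw [ae_iff]; simpa using hR
  filter_upwards [this] with t ht
  simpa using pow_le_pow_left₀ (abs_nonneg t) ht k

theorem monomialsBesselWithReal_of_tail {μ : Measure ℝ} [IsFiniteMeasure μ] {R : ℝ}
    (hR : μ {t : ℝ | R < |t|} = 0) {C : ℝ} (hC : 0 ≤ C)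
    (htail : ∀ ε ∈ Set.Ioo (0 : ℝ) 1, μ {t : ℝ | 1 - ε < |t|} ≤ ENNReal.ofReal (C * ε)) :
    MonomialsBesselWithReal μ (4 * (C + μ.real Set.univ)) := by
  set K := C + μ.real Set.univ
  have hK : 0 ≤ K := add_nonneg hC measureReal_nonneg
  intro g hg F
  obtain ⟨N, hFN⟩ := F.exists_nat_subset_range
  set e : ℕ → Lp ℂ 2 μ := fun k => (memLp_monomial hR k).toLp _
  have hinner : ∀ k, inner ℂ (e k) (hg.toLp g) = ∫ t, g t * (starRingEnd ℂ) ((t : ℂ) ^ k) ∂μ :=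
    fun k => by simp_rw [e, inner_toLp_toLp, RCLike.inner_apply]
  have hgram : ∀ k l, ‖inner ℂ (e k) (e l)‖ ≤ K / (k + l + 1) := by
    intro k l
    rw [inner_toLp_toLp]
    refine (norm_integral_le_integral_norm _).trans (le_of_eq_of_le ?_
      (by exact_mod_cast integral_abs_pow_le htail hC (k + l)))
    simp [pow_add, mul_comm]
  have hsynth : ∀ c : ℕ → ℂ,
      ‖∑ k ∈ range N, c k • e k‖ ^ 2 ≤ 4 * K * ∑ k ∈ range N, ‖c k‖ ^ 2 := by
    intro c
    calc ‖∑ k ∈ range N, c k • e k‖ ^ 2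
        ≤ ∑ k ∈ range N, ∑ l ∈ range N, ‖c k‖ * ‖c l‖ * ‖inner ℂ (e k) (e l)‖ :=
          norm_sum_smul_sq_le e _ c
      _ ≤ K * ∑ k ∈ range N, ∑ l ∈ range N, ‖c k‖ * ‖c l‖ / (k + l + 1) := by
          simp_rw [mul_sum]
          refine sum_le_sum fun k _ => sum_le_sum fun l _ => ?_
          calc ‖c k‖ * ‖c l‖ * ‖inner ℂ (e k) (e l)‖ ≤ ‖c k‖ * ‖c l‖ * (K / (k + l + 1)) := by
                gcongr; exact hgram k l
            _ = K * (‖c k‖ * ‖c l‖ / (k + l + 1)) := by ring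
      _ ≤ K * (4 * ∑ k ∈ range N, ‖c k‖ ^ 2) := by
          gcongr
          exact sum_sum_mul_div_add_add_one_le _ (fun k => norm_nonneg _) N
      _ = 4 * K * ∑ k ∈ range N, ‖c k‖ ^ 2 := by ring
  calc ∑ k ∈ F, ‖∫ t, g t * (starRingEnd ℂ) ((t : ℂ) ^ k) ∂μ‖ ^ 2
      ≤ ∑ k ∈ range N, ‖inner ℂ (e k) (hg.toLp g)‖ ^ 2 := by
        simp_rw [hinner]
        exact sum_le_sum_of_subset_of_nonneg hFN fun _ _ _ => by positivity
    _ ≤ 4 * K * ‖hg.toLp g‖ ^ 2 := sum_norm_inner_sq_le (by positivity) hsynth _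
    _ = 4 * K * ∫ t, ‖g t‖ ^ 2 ∂μ := by rw [norm_toLp_sq]

lemma half_le_one_sub_pow {ε : ℝ} (hε : ε ≤ 2) {n : ℕ} (hn : 2 * n * ε ≤ 1) :
    1 / 2 ≤ (1 - ε) ^ n := by
  have := one_add_mul_le_pow (a := -ε) (by linarith) n
  rw [← sub_eq_add_neg] at this
  linarith

section Necessity

variable {μ : Measure ℝ} [IsFiniteMeasure μ] {R : ℝ} (hR : μ {t : ℝ | R < |t|} = 0)
include hR

lemma half_measureReal_le_norm_integral {ε : ℝ} (hε1 : ε ≤ 1) {j : ℕ}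
    (hj : 4 * j * ε ≤ 1) :
    μ.real {t : ℝ | 1 - ε < |t|} / 2 ≤
      ‖∫ t, {t : ℝ | 1 - ε < |t|}.indicator 1 t * (starRingEnd ℂ) ((t : ℂ) ^ (2 * j)) ∂μ‖ := by
  set A := {t : ℝ | 1 - ε < |t|}
  have hA : MeasurableSet A := measurableSet_lt measurable_const continuous_abs.measurable
  have hint : ∫ t, A.indicator 1 t * (starRingEnd ℂ) ((t : ℂ) ^ (2 * j)) ∂μ =
      ((∫ t in A, t ^ (2 * j) ∂μ : ℝ) : ℂ) := by
    rw [← integral_complex_ofReal, ← integral_indicator hA]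
    congr 1 with t
    by_cases ht : t ∈ A <;> simp [ht]
  rw [hint, Complex.norm_real, Real.norm_eq_abs]
  refine le_trans ?_ (le_abs_self _)
  calc μ.real A / 2 ≤ (1 - ε) ^ (2 * j) * μ.real A := by
        have := half_le_one_sub_pow (by linarith) (n := 2 * j) (by push_cast; linarith)
        nlinarith [measureReal_nonneg (μ := μ) (s := A)]
    _ ≤ ∫ t in A, t ^ (2 * j) ∂μ := by
        refine setIntegral_ge_of_const_le_real hA (measure_ne_top μ A)
          (fun t (ht : 1 - ε < |t|) => ?_) ?_
        · rw [pow_mul, pow_mul, ← sq_abs t]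
          gcongr
        · have := ((memLp_monomial hR (2 * j)).integrable one_le_two).re
          simp_rw [← Complex.ofReal_pow, RCLike.re_to_complex, Complex.ofReal_re] at this
          exact this.integrableOn

variable {C : ℝ} (hB : MonomialsBesselWithReal μ C)
include hB

/-- Test the Bessel inequality against `g = 1_A`, `A = {1 - ε < |t|}`, on the even monomials
`t^(2j)`, `j < N`, each of which has inner product at least `μ(A)/2` with `g`. -/
lemma mul_measureReal_sq_le_of_bessel {ε : ℝ} (hε1 : ε ≤ 1) {N : ℕ} (hN : 4 * N * ε ≤ 1) :
    N * μ.real {t : ℝ | 1 - ε < |t|} ^ 2 ≤ 4 * C * μ.real {t : ℝ | 1 - ε < |t|} := by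
  set A := {t : ℝ | 1 - ε < |t|}
  have hA : MeasurableSet A := measurableSet_lt measurable_const continuous_abs.measurable
  have hg : MemLp (A.indicator (1 : ℝ → ℂ)) 2 μ :=
    memLp_indicator_const 2 hA 1 (Or.inr (measure_ne_top μ A))
  have hnorm : ∫ t, ‖A.indicator (1 : ℝ → ℂ) t‖ ^ 2 ∂μ = μ.real A := by
    have : (fun t => ‖A.indicator (1 : ℝ → ℂ) t‖ ^ 2) = A.indicator 1 := by
      ext t; by_cases ht : t ∈ A <;> simp [ht]
    rw [this, integral_indicator_one hA]
  have hsum := hB _ hg ((range N).image (2 * ·))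
  rw [sum_image (by intro a _ b _ h; simpa using h), hnorm] at hsum
  calc N * μ.real A ^ 2 = ∑ j ∈ range N, 4 * (μ.real A / 2) ^ 2 := by
        rw [sum_const, card_range, nsmul_eq_mul]; ring
    _ ≤ ∑ j ∈ range N,
          4 * ‖∫ t, A.indicator 1 t * (starRingEnd ℂ) ((t : ℂ) ^ (2 * j)) ∂μ‖ ^ 2 := by
        gcongr with j hj
        have hjN : (j : ℝ) ≤ N := by exact_mod_cast (mem_range.mp hj).le
        refine half_measureReal_le_norm_integral hR hε1 ?_
        rcases le_total 0 ε with h | h <;> nlinarith [j.cast_nonneg (α := ℝ)]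
    _ ≤ 4 * C * μ.real A := by rw [← mul_sum]; linarith

/-- `N = ⌊1/(4ε)⌋` in `mul_measureReal_sq_le_of_bessel` gives `μ(A) ≤ 4C/N ≤ 32Cε` once
`ε ≤ 1/4`. -/
lemma measureReal_tail_le_of_bessel (hC : 0 ≤ C) {ε : ℝ} (hε : ε ∈ Set.Ioo (0 : ℝ) 1) :
    μ.real {t : ℝ | 1 - ε < |t|} ≤ (32 * C + 4 * μ.real Set.univ) * ε := by
  obtain ⟨hε0, hε1⟩ := hε
  set x := μ.real {t : ℝ | 1 - ε < |t|}
  have hx0 : 0 ≤ x := measureReal_nonneg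
  have hxu : x ≤ μ.real Set.univ := measureReal_mono (Set.subset_univ _)
  rcases le_or_gt ε (1 / 4) with hsmall | hbig
  · set N := ⌊1 / (4 * ε)⌋₊
    have hN1 : (1 : ℝ) ≤ N := by
      exact_mod_cast Nat.le_floor (by rw [Nat.cast_one, le_div_iff₀ (by positivity)]; linarith)
    have hN : 4 * N * ε ≤ 1 := by
      have := Nat.floor_le (a := 1 / (4 * ε)) (by positivity)
      rw [le_div_iff₀ (by positivity)] at this
      linarith
    have h8N : 1 < 8 * N * ε := by
      have : 1 / (4 * ε) < N + 1 := Nat.lt_floor_add_one _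
      rw [div_lt_iff₀ (by positivity)] at this
      nlinarith
    have key := mul_measureReal_sq_le_of_bessel hR hB hε1.le hN
    rcases hx0.eq_or_lt with hx | hx
    · rw [← hx]; positivity
    · have hNx : N * x ≤ 4 * C := by nlinarith
      nlinarith [measureReal_nonneg (μ := μ) (s := Set.univ)]
  · nlinarith

end Necessity

theorem stmt_8 (μ : Measure ℝ) [IsFiniteMeasure μ]
    (hsupp : ∃ R : ℝ, μ {t : ℝ | R < |t|} = 0) :
    (∃ C > 0, MonomialsBesselWithReal μ C) ↔
      (∃ C > 0, ∀ ε ∈ Set.Ioo (0 : ℝ) 1, μ {t : ℝ | 1 - ε < |t|} ≤ ENNReal.ofReal (C * ε)) := by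
  obtain ⟨R, hR⟩ := hsupp
  have hμ : 0 ≤ μ.real Set.univ := measureReal_nonneg
  constructor
  · rintro ⟨C, hC, hB⟩
    refine ⟨32 * C + 4 * μ.real Set.univ, by positivity, fun ε hε => ?_⟩
    rw [← ofReal_measureReal (measure_ne_top μ _)]
    exact ENNReal.ofReal_le_ofReal (measureReal_tail_le_of_bessel hR hB hC.le hε)
  · rintro ⟨C, hC, htail⟩
    exact ⟨4 * (C + μ.real Set.univ), by positivity, monomialsBesselWithReal_of_tail hR hC.le htail⟩
end

section
/- Let μ be a finite positive Borel measure on ℝ with μ(ℝ∖(−1,1)) = 0, and assume there exist ε ∈ (0,1) and C > 0 such that μ(Δ) ≤ C·λ₁(Δ) for every Borel set Δ contained in {t ∈ (−1,1) : |t| > 1 − ε}, where λ₁ is one-dimensional Lebesgue measure. Then the sequence of monomials (e_k)_{k∈ℕ}, e_k(t) = t^k, is a Bessel sequence in L²(μ). -/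
/-!
By duality, the Bessel bound for the monomials amounts to the synthesis bound
`∫ |∑ c_k t^k|² dμ ≤ K ∑ |c_k|²`. On `|t| ≤ 1 - ε` the polynomial is controlled pointwise by
Cauchy–Schwarz against the geometric weights `(1 - ε)^k`. Near `±1` the hypothesis `μ ≤ C λ`
reduces the bound to Lebesgue measure, where
`∫_{-1}^1 |∑ c_k t^k|² dt ≤ 2 ∑_{j,k} |c_j| |c_k| / (j + k + 1)`, and the right-hand side is
bounded by Hilbert's inequality (here with constant `4`, proved by a Schur test).
-/

open MeasureTheory

open Filter Finset Real ComplexConjugate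

lemma one_div_sqrt_succ_le (k : ℕ) : 1 / √(k + 1 : ℝ) ≤ 2 * (√(k + 1 : ℝ) - √k) := by
  have ha : 0 < √(k + 1 : ℝ) := sqrt_pos.2 (by positivity)
  have hb : √(k : ℝ) ≤ √(k + 1 : ℝ) := sqrt_le_sqrt (by linarith)
  rw [div_le_iff₀ ha]
  nlinarith [sq_sqrt (by positivity : (0 : ℝ) ≤ k + 1), sq_sqrt (Nat.cast_nonneg (α := ℝ) k),
    sq_nonneg (√(k + 1 : ℝ) - √k)]

lemma sum_range_one_div_sqrt_succ_le (n : ℕ) : ∑ k ∈ range n, 1 / √(k + 1 : ℝ) ≤ 2 * √n := by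
  calc ∑ k ∈ range n, 1 / √(k + 1 : ℝ)
      ≤ ∑ k ∈ range n, 2 * (√((k + 1 : ℕ) : ℝ) - √k) :=
        sum_le_sum fun k _ => by exact_mod_cast one_div_sqrt_succ_le k
    _ = 2 * √n := by rw [← mul_sum, sum_range_sub (fun k => √(k : ℝ))]; simp

lemma one_div_mul_sqrt_succ_le {k : ℕ} (hk : 1 ≤ k) :
    1 / ((k + 1) * √(k + 1 : ℝ)) ≤ 2 * (1 / √k - 1 / √(k + 1 : ℝ)) := by
  have ha : 0 < √(k + 1 : ℝ) := sqrt_pos.2 (by positivity)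
  have hb : 0 < √(k : ℝ) := sqrt_pos.2 (by exact_mod_cast hk)
  have hab : √(k : ℝ) ≤ √(k + 1 : ℝ) := sqrt_le_sqrt (by linarith)
  have ha2 := sq_sqrt (by positivity : (0 : ℝ) ≤ k + 1)
  have hb2 := sq_sqrt (Nat.cast_nonneg (α := ℝ) k)
  rw [show ((k : ℝ) + 1) * √(k + 1 : ℝ) = √(k + 1 : ℝ) ^ 2 * √(k + 1 : ℝ) by rw [ha2],
    div_sub_div _ _ hb.ne' ha.ne', mul_div_assoc', div_le_div_iff₀ (by positivity)
    (by positivity)]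
  nlinarith [mul_pos ha hb, mul_le_mul_of_nonneg_left hab ha.le, sq_nonneg (√(k + 1 : ℝ) - √k)]

lemma sum_Ico_one_div_mul_sqrt_succ_le (j N : ℕ) :
    ∑ k ∈ Ico (j + 1) N, 1 / ((k + 1) * √(k + 1 : ℝ)) ≤ 2 / √(j + 1 : ℝ) := by
  rcases le_or_gt N (j + 1) with hN | hN
  · rw [Ico_eq_empty_of_le hN, sum_empty]; positivity
  calc ∑ k ∈ Ico (j + 1) N, 1 / ((k + 1) * √(k + 1 : ℝ))
      ≤ ∑ k ∈ Ico (j + 1) N, -2 * (1 / √((k + 1 : ℕ) : ℝ) - 1 / √k) :=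
        sum_le_sum fun k hk => by
          have := one_div_mul_sqrt_succ_le (k := k) (by simp at hk; omega)
          push_cast; linarith
    _ = 2 / √(j + 1 : ℝ) - 2 / √N := by
        rw [← mul_sum, sum_Ico_sub (fun k => 1 / √(k : ℝ)) hN.le]; push_cast; ring
    _ ≤ 2 / √(j + 1 : ℝ) := by linarith [show 0 ≤ 2 / √(N : ℝ) by positivity]

lemma sum_sqrt_div_sqrt_mul_add_le (j : ℕ) (F : Finset ℕ) :
    ∑ k ∈ F, √(j + 1 : ℝ) / (√(k + 1 : ℝ) * (j + k + 1)) ≤ 4 := by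
  have hj : 0 < √(j + 1 : ℝ) := sqrt_pos.2 (by positivity)
  have hj2 := sq_sqrt (by positivity : (0 : ℝ) ≤ j + 1)
  rw [← sum_filter_add_sum_filter_not F (· ≤ j)]
  have low : ∑ k ∈ F with k ≤ j, √(j + 1 : ℝ) / (√(k + 1 : ℝ) * (j + k + 1)) ≤ 2 := calc
    _ ≤ ∑ k ∈ F with k ≤ j, 1 / √(j + 1 : ℝ) * (1 / √(k + 1 : ℝ)) := by
        refine sum_le_sum fun k _ => ?_
        rw [div_mul_div_comm, one_mul, div_le_div_iff₀ (by positivity) (by positivity)]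
        nlinarith [sqrt_nonneg (k + 1 : ℝ), mul_nonneg (sqrt_nonneg (k + 1 : ℝ)) hj.le,
          Nat.cast_nonneg (α := ℝ) k]
    _ ≤ ∑ k ∈ range (j + 1), 1 / √(j + 1 : ℝ) * (1 / √(k + 1 : ℝ)) :=
        sum_le_sum_of_subset_of_nonneg (fun k hk => by simp at hk ⊢; omega)
          fun _ _ _ => by positivity
    _ ≤ 1 / √(j + 1 : ℝ) * (2 * √(j + 1 : ℝ)) := by
        rw [← mul_sum]
        gcongr
        exact_mod_cast sum_range_one_div_sqrt_succ_le (j + 1)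
    _ = 2 := by field_simp
  have high : ∑ k ∈ F with ¬k ≤ j, √(j + 1 : ℝ) / (√(k + 1 : ℝ) * (j + k + 1)) ≤ 2 := calc
    _ ≤ ∑ k ∈ F with ¬k ≤ j, √(j + 1 : ℝ) * (1 / ((k + 1) * √(k + 1 : ℝ))) := by
        refine sum_le_sum fun k _ => ?_
        rw [mul_one_div, mul_comm ((k : ℝ) + 1)]
        gcongr
        linarith [Nat.cast_nonneg (α := ℝ) j]
    _ ≤ ∑ k ∈ Ico (j + 1) (F.sup id + 1), √(j + 1 : ℝ) * (1 / ((k + 1) * √(k + 1 : ℝ))) :=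
        sum_le_sum_of_subset_of_nonneg
          (fun k hk => by
            have := subset_range_sup_succ F (mem_filter.1 hk).1
            simp at hk this ⊢; omega)
          fun _ _ _ => by positivity
    _ ≤ √(j + 1 : ℝ) * (2 / √(j + 1 : ℝ)) := by
        rw [← mul_sum]
        gcongr
        exact sum_Ico_one_div_mul_sqrt_succ_le j _
    _ = 2 := by field_simp
  linarith

theorem hilbert_inequality (a : ℕ → ℝ) (F : Finset ℕ) :
    ∑ j ∈ F, ∑ k ∈ F, a j * a k / (j + k + 1) ≤ 4 * ∑ j ∈ F, a j ^ 2 := by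
  set w : ℕ → ℕ → ℝ := fun j k => √(j + 1 : ℝ) / (√(k + 1 : ℝ) * (j + k + 1))
  -- Schur test with weights `√(k + 1)`: AM-GM with the ratio `√(j + 1) / √(k + 1)`
  have amgm : ∀ j k, a j * a k / (j + k + 1) ≤ (a j ^ 2 * w j k + a k ^ 2 * w k j) / 2 := by
    intro j k
    have hj : 0 < √(j + 1 : ℝ) := sqrt_pos.2 (by positivity)
    have hk : 0 < √(k + 1 : ℝ) := sqrt_pos.2 (by positivity)
    simp only [w]
    rw [add_comm (k : ℝ) j]
    field_simp
    nlinarith [sq_nonneg (a j * √(j + 1 : ℝ) - a k * √(k + 1 : ℝ)),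
      sq_sqrt (by positivity : (0 : ℝ) ≤ j + 1), sq_sqrt (by positivity : (0 : ℝ) ≤ k + 1)]
  have row : ∑ j ∈ F, ∑ k ∈ F, a j ^ 2 * w j k ≤ 4 * ∑ j ∈ F, a j ^ 2 := by
    rw [mul_sum]
    exact sum_le_sum fun j _ => by
      rw [← mul_sum, mul_comm]
      exact mul_le_mul_of_nonneg_right (sum_sqrt_div_sqrt_mul_add_le j F) (sq_nonneg _)
  calc ∑ j ∈ F, ∑ k ∈ F, a j * a k / (j + k + 1)
      ≤ ∑ j ∈ F, ∑ k ∈ F, (a j ^ 2 * w j k + a k ^ 2 * w k j) / 2 :=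
        sum_le_sum fun j _ => sum_le_sum fun k _ => amgm j k
    _ = (∑ j ∈ F, ∑ k ∈ F, a j ^ 2 * w j k + ∑ j ∈ F, ∑ k ∈ F, a k ^ 2 * w k j) / 2 := by
        simp only [← sum_div, sum_add_distrib]
    _ ≤ 4 * ∑ j ∈ F, a j ^ 2 := by rw [sum_comm (f := fun j k => a k ^ 2 * w k j)]; linarith

lemma integral_abs_pow_neg_one_one (m : ℕ) : ∫ t in (-1 : ℝ)..1, |t| ^ m = 2 / (m + 1) := by
  have half : ∫ t in (0 : ℝ)..1, |t| ^ m = 1 / (m + 1) := by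
    rw [intervalIntegral.integral_congr (g := fun t => t ^ m) fun t ht => by
      rw [Set.uIcc_of_le zero_le_one] at ht; rw [abs_of_nonneg ht.1], integral_pow]
    simp
  have hint (a b : ℝ) : IntervalIntegrable (|·| ^ m) volume a b :=
    (continuous_abs.pow m).intervalIntegrable a b
  rw [← intervalIntegral.integral_add_adjacent_intervals (hint (-1) 0) (hint 0 1), ← neg_zero,
    ← intervalIntegral.integral_comp_neg]
  simp only [abs_neg, neg_zero, half]
  ring

lemma norm_sum_mul_pow_le (c : ℕ → ℂ) (F : Finset ℕ) (t : ℝ) :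
    ‖∑ k ∈ F, c k * (t : ℂ) ^ k‖ ≤ ∑ k ∈ F, ‖c k‖ * |t| ^ k :=
  (norm_sum_le _ _).trans_eq <| sum_congr rfl fun k _ => by simp

theorem intervalIntegral_norm_sum_mul_pow_sq_le (c : ℕ → ℂ) (F : Finset ℕ) :
    ∫ t in (-1 : ℝ)..1, ‖∑ k ∈ F, c k * (t : ℂ) ^ k‖ ^ 2 ≤ 8 * ∑ k ∈ F, ‖c k‖ ^ 2 := by
  have hint {f : ℝ → ℝ} (hf : Continuous f) : IntervalIntegrable f volume (-1) 1 :=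
    hf.intervalIntegrable _ _
  calc
    _ ≤ ∫ t in (-1 : ℝ)..1, ∑ j ∈ F, ∑ k ∈ F, ‖c j‖ * ‖c k‖ * |t| ^ (j + k) := by
        refine intervalIntegral.integral_mono (by norm_num) (hint (by fun_prop))
          (hint (by fun_prop)) fun t => ?_
        calc ‖∑ k ∈ F, c k * (t : ℂ) ^ k‖ ^ 2 ≤ (∑ k ∈ F, ‖c k‖ * |t| ^ k) ^ 2 := by
              gcongr; exact norm_sum_mul_pow_le c F t
          _ = _ := by
              rw [sq, sum_mul_sum]
              exact sum_congr rfl fun j _ => sum_congr rfl fun k _ => by ring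
    _ = 2 * ∑ j ∈ F, ∑ k ∈ F, ‖c j‖ * ‖c k‖ / (j + k + 1) := by
        rw [intervalIntegral.integral_finsetSum fun j _ => hint (by fun_prop), mul_sum]
        refine sum_congr rfl fun j _ => ?_
        rw [intervalIntegral.integral_finsetSum fun k _ => hint (by fun_prop), mul_sum]
        refine sum_congr rfl fun k _ => ?_
        rw [intervalIntegral.integral_const_mul, integral_abs_pow_neg_one_one]
        push_cast
        ring
    _ ≤ 8 * ∑ k ∈ F, ‖c k‖ ^ 2 := by linarith [hilbert_inequality (‖c ·‖) F]

lemma norm_sum_mul_pow_sq_le_of_abs_le (c : ℕ → ℂ) (F : Finset ℕ) {r t : ℝ} (hr : r < 1)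
    (ht : |t| ≤ r) :
    ‖∑ k ∈ F, c k * (t : ℂ) ^ k‖ ^ 2 ≤ (∑ k ∈ F, ‖c k‖ ^ 2) / (1 - r ^ 2) := by
  have hr0 : 0 ≤ r := (abs_nonneg t).trans ht
  have hr2 : r ^ 2 < 1 := by nlinarith
  calc ‖∑ k ∈ F, c k * (t : ℂ) ^ k‖ ^ 2 ≤ (∑ k ∈ F, ‖c k‖ * r ^ k) ^ 2 := by
        gcongr
        exact (norm_sum_mul_pow_le c F t).trans (sum_le_sum fun k _ => by gcongr)
    _ ≤ (∑ k ∈ F, ‖c k‖ ^ 2) * ∑ k ∈ F, (r ^ 2) ^ k := by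
        simpa only [← pow_mul, mul_comm 2] using sum_mul_sq_le_sq_mul_sq F (‖c ·‖) (r ^ ·)
    _ ≤ (∑ k ∈ F, ‖c k‖ ^ 2) * (1 - r ^ 2)⁻¹ := by
        gcongr
        rw [← tsum_geometric_of_lt_one (by positivity) hr2]
        exact (summable_geometric_of_lt_one (by positivity) hr2).sum_le_tsum F
          fun _ _ => by positivity
    _ = _ := div_eq_mul_inv _ _ |>.symm

lemma MeasureTheory.Measure.restrict_le_smul_restrict {α : Type*} [MeasurableSpace α]
    {μ ν : Measure α} {s : Set α} (hs : MeasurableSet s) {c : ENNReal}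
    (h : ∀ t, MeasurableSet t → t ⊆ s → μ t ≤ c * ν t) :
    μ.restrict s ≤ c • ν.restrict s := by
  refine Measure.le_iff.2 fun t ht => ?_
  rw [Measure.smul_apply, Measure.restrict_apply ht, Measure.restrict_apply ht, smul_eq_mul]
  exact h _ (ht.inter hs) Set.inter_subset_right

lemma setIntegral_le_mul_setIntegral_of_restrict_le {α : Type*} [MeasurableSpace α]
    {μ ν : Measure α} {s : Set α} {C : ℝ} (hC : 0 ≤ C)
    (hμν : μ.restrict s ≤ ENNReal.ofReal C • ν.restrict s) {f : α → ℝ}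
    (hf0 : 0 ≤ᵐ[ν.restrict s] f) (hf : IntegrableOn f s ν) :
    ∫ x in s, f x ∂μ ≤ C * ∫ x in s, f x ∂ν := calc
  ∫ x in s, f x ∂μ ≤ ∫ x, f x ∂(ENNReal.ofReal C • ν.restrict s) :=
      integral_mono_measure hμν (Measure.ae_smul_measure hf0 _)
        (hf.smul_measure ENNReal.ofReal_ne_top)
  _ = C * ∫ x in s, f x ∂ν := by
      rw [integral_smul_measure, ENNReal.toReal_ofReal hC, smul_eq_mul]

lemma setIntegral_norm_sum_mul_pow_sq_le_of_abs_le {μ : Measure ℝ} [IsFiniteMeasure μ]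
    {s : Set ℝ} {r : ℝ} (hr : r < 1) (hs : ∀ᵐ t ∂μ.restrict s, |t| ≤ r) (c : ℕ → ℂ)
    (F : Finset ℕ) :
    ∫ t in s, ‖∑ k ∈ F, c k * (t : ℂ) ^ k‖ ^ 2 ∂μ
      ≤ μ.real s * ((∑ k ∈ F, ‖c k‖ ^ 2) / (1 - r ^ 2)) := calc
  _ ≤ ∫ _ in s, (∑ k ∈ F, ‖c k‖ ^ 2) / (1 - r ^ 2) ∂μ :=
      integral_mono_of_nonneg (ae_of_all _ fun t => by positivity) (integrable_const _)
        (hs.mono fun t ht => norm_sum_mul_pow_sq_le_of_abs_le c F hr ht)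
  _ = _ := by rw [setIntegral_const, smul_eq_mul]

lemma setIntegral_norm_sum_mul_pow_sq_le_of_restrict_le {μ : Measure ℝ} {s : Set ℝ}
    (hs : s ⊆ Set.Ioo (-1) 1) {C : ℝ} (hC : 0 ≤ C)
    (hμ : μ.restrict s ≤ ENNReal.ofReal C • volume.restrict s) (c : ℕ → ℂ) (F : Finset ℕ) :
    ∫ t in s, ‖∑ k ∈ F, c k * (t : ℂ) ^ k‖ ^ 2 ∂μ ≤ C * (8 * ∑ k ∈ F, ‖c k‖ ^ 2) := by
  set f : ℝ → ℝ := fun t => ‖∑ k ∈ F, c k * (t : ℂ) ^ k‖ ^ 2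
  have hf0 : 0 ≤ f := fun t => sq_nonneg _
  have hfIoo : IntegrableOn f (Set.Ioo (-1) 1) :=
    ((by fun_prop : Continuous f).integrableOn_Icc (a := -1) (b := 1)).mono_set
      Set.Ioo_subset_Icc_self
  calc ∫ t in s, f t ∂μ ≤ C * ∫ t in s, f t :=
        setIntegral_le_mul_setIntegral_of_restrict_le hC hμ (ae_of_all _ hf0) (hfIoo.mono_set hs)
    _ ≤ C * ∫ t in Set.Ioo (-1) 1, f t := mul_le_mul_of_nonneg_left
        (setIntegral_mono_set hfIoo (ae_of_all _ hf0) (Eventually.of_forall hs)) hC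
    _ = C * ∫ t in (-1 : ℝ)..1, f t := by
        rw [intervalIntegral.integral_of_le (by norm_num), integral_Ioc_eq_integral_Ioo]
    _ ≤ C * (8 * ∑ k ∈ F, ‖c k‖ ^ 2) := by
        gcongr
        exact intervalIntegral_norm_sum_mul_pow_sq_le c F

theorem integral_norm_sum_mul_pow_sq_le {μ : Measure ℝ} [IsFiniteMeasure μ]
    (hμ : ∀ᵐ t ∂μ, t ∈ Set.Ioo (-1 : ℝ) 1) {r C : ℝ} (hr0 : 0 ≤ r) (hr : r < 1) (hC : 0 ≤ C)
    (hcar : ∀ Δ : Set ℝ, MeasurableSet Δ → Δ ⊆ {t : ℝ | t ∈ Set.Ioo (-1 : ℝ) 1 ∧ r < |t|} →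
        μ Δ ≤ ENNReal.ofReal C * volume Δ)
    (c : ℕ → ℂ) (F : Finset ℕ) :
    ∫ t, ‖∑ k ∈ F, c k * (t : ℂ) ^ k‖ ^ 2 ∂μ
      ≤ (μ.real Set.univ / (1 - r ^ 2) + 8 * C) * ∑ k ∈ F, ‖c k‖ ^ 2 := by
  set f : ℝ → ℝ := fun t => ‖∑ k ∈ F, c k * (t : ℂ) ^ k‖ ^ 2
  set S := ∑ k ∈ F, ‖c k‖ ^ 2
  set B := {t : ℝ | t ∈ Set.Ioo (-1 : ℝ) 1 ∧ r < |t|}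
  have hB : MeasurableSet B :=
    measurableSet_Ioo.inter (measurableSet_lt measurable_const continuous_abs.measurable)
  have hfμ : Integrable f μ := by
    rw [← Measure.restrict_eq_self_of_ae_mem hμ]
    exact ((by fun_prop : Continuous f).integrableOn_Icc (a := -1) (b := 1)).mono_set
      Set.Ioo_subset_Icc_self
  have near : ∫ t in B, f t ∂μ ≤ C * (8 * S) :=
    setIntegral_norm_sum_mul_pow_sq_le_of_restrict_le (fun t ht => ht.1) hC
      (Measure.restrict_le_smul_restrict hB hcar) c F
  have far : ∫ t in Bᶜ, f t ∂μ ≤ μ.real Set.univ * (S / (1 - r ^ 2)) := by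
    have hS : 0 ≤ S / (1 - r ^ 2) := div_nonneg (by positivity) (by nlinarith)
    refine (setIntegral_norm_sum_mul_pow_sq_le_of_abs_le hr ?_ c F).trans
      (mul_le_mul_of_nonneg_right (measureReal_mono (Set.subset_univ _)) hS)
    filter_upwards [ae_restrict_mem hB.compl, ae_restrict_of_ae hμ] with t htB ht
    exact not_lt.1 fun h => htB ⟨ht, h⟩
  calc ∫ t, f t ∂μ = ∫ t in B, f t ∂μ + ∫ t in Bᶜ, f t ∂μ := (integral_add_compl hB hfμ).symm
    _ ≤ C * (8 * S) + μ.real Set.univ * (S / (1 - r ^ 2)) := add_le_add near far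
    _ = _ := by ring

theorem sum_norm_integral_mul_conj_sq_le {α : Type*} [MeasurableSpace α] {μ : Measure α}
    {φ : ℕ → α → ℂ} (hφ : ∀ k, MemLp (φ k) 2 μ) {K : ℝ} (hK : 0 < K)
    (hsyn : ∀ (c : ℕ → ℂ) (F : Finset ℕ),
      ∫ x, ‖∑ k ∈ F, c k * φ k x‖ ^ 2 ∂μ ≤ K * ∑ k ∈ F, ‖c k‖ ^ 2)
    {g : α → ℂ} (hg : MemLp g 2 μ) (F : Finset ℕ) :
    ∑ k ∈ F, ‖∫ x, g x * conj (φ k x) ∂μ‖ ^ 2 ≤ K * ∫ x, ‖g x‖ ^ 2 ∂μ := by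
  set c : ℕ → ℂ := fun k => ∫ x, g x * conj (φ k x) ∂μ
  set p : α → ℂ := fun x => ∑ k ∈ F, c k * φ k x
  set S := ∑ k ∈ F, ‖c k‖ ^ 2
  have hp : MemLp p 2 μ := memLp_finsetSum F fun k _ => (hφ k).const_mul (c k)
  have hint : ∀ k, Integrable (fun x => g x * conj (φ k x)) μ :=
    fun k => hg.integrable_mul (hφ k).star
  have hpair : ∫ x, g x * conj (p x) ∂μ = S := by
    simp only [p, map_sum, map_mul, mul_sum, mul_left_comm (g _)]
    rw [integral_finsetSum _ fun k _ => (hint k).const_mul _]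
    simp only [S, Complex.ofReal_sum]
    refine sum_congr rfl fun k _ => ?_
    rw [integral_const_mul, Complex.ofReal_pow, ← Complex.mul_conj', mul_comm]
  have hS : S ≤ (K * ∫ x, ‖g x‖ ^ 2 ∂μ + S) / 2 := calc
    S = ‖∫ x, g x * conj (p x) ∂μ‖ := by
        rw [hpair, Complex.norm_of_nonneg (sum_nonneg fun k _ => sq_nonneg _)]
    _ ≤ ∫ x, ‖g x‖ * ‖p x‖ ∂μ := (norm_integral_le_integral_norm _).trans_eq (by simp)
    _ ≤ ∫ x, (K * ‖g x‖ ^ 2 + ‖p x‖ ^ 2 / K) / 2 ∂μ := by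
        -- AM-GM with weight `K` instead of Cauchy–Schwarz, so that `‖p‖² ≤ K S` closes the
        -- estimate linearly in `S`
        refine integral_mono_of_nonneg (ae_of_all _ fun x => by positivity)
          (((hg.integrable_norm_pow two_ne_zero).const_mul K).add
            ((hp.integrable_norm_pow two_ne_zero).div_const K) |>.div_const 2)
          (ae_of_all _ fun x => ?_)
        have := sq_nonneg (K * ‖g x‖ - ‖p x‖)
        rw [le_div_iff₀ two_pos, ← sub_nonneg]
        field_simp
        nlinarith
    _ = (K * ∫ x, ‖g x‖ ^ 2 ∂μ + (∫ x, ‖p x‖ ^ 2 ∂μ) / K) / 2 := by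
        rw [integral_div, integral_add ((hg.integrable_norm_pow two_ne_zero).const_mul K)
          ((hp.integrable_norm_pow two_ne_zero).div_const K), integral_const_mul, integral_div]
    _ ≤ (K * ∫ x, ‖g x‖ ^ 2 ∂μ + S) / 2 := by
        gcongr
        rw [div_le_iff₀ hK, mul_comm]
        exact hsyn c F
  linarith

lemma memLp_ofReal_pow {μ : Measure ℝ} [IsFiniteMeasure μ] (hμ : ∀ᵐ t ∂μ, |t| ≤ 1)
    (p : ENNReal) (k : ℕ) : MemLp (fun t : ℝ => (t : ℂ) ^ k) p μ :=
  MemLp.of_bound (by fun_prop : Continuous _).aestronglyMeasurable 1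
    (hμ.mono fun t ht => by simpa using pow_le_one₀ (abs_nonneg t) ht)

theorem stmt_18 (μ : Measure ℝ) [IsFiniteMeasure μ]
    (hμ : μ (Set.Ioo (-1 : ℝ) 1)ᶜ = 0)
    (h : ∃ ε ∈ Set.Ioo (0 : ℝ) 1, ∃ C > 0, ∀ Δ : Set ℝ, MeasurableSet Δ →
        Δ ⊆ {t : ℝ | t ∈ Set.Ioo (-1 : ℝ) 1 ∧ 1 - ε < |t|} →
        μ Δ ≤ ENNReal.ofReal C * volume Δ) :
    ∃ C > 0, MonomialsBesselWithReal μ C := by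
  obtain ⟨ε, ⟨hε0, hε1⟩, C, hC, hcar⟩ := h
  have hμ' : ∀ᵐ t ∂μ, t ∈ Set.Ioo (-1 : ℝ) 1 := mem_ae_iff.2 hμ
  have hr : 0 < 1 - (1 - ε) ^ 2 := by nlinarith
  refine ⟨μ.real Set.univ / (1 - (1 - ε) ^ 2) + 8 * C, by positivity, fun g hg F => ?_⟩
  exact sum_norm_integral_mul_conj_sq_le (φ := fun k (t : ℝ) => (t : ℂ) ^ k)
    (memLp_ofReal_pow (hμ'.mono fun t ht => (abs_lt.2 ht).le) 2) (by positivity)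
    (integral_norm_sum_mul_pow_sq_le hμ' (by linarith) (by linarith) hC.le hcar) hg F
end
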